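/- arXiv:2004.01958 — 5 statements merged into one kernel-verified Lean document; each statement's English description precedes it below -/
import Mathlib

section
/- In the 5-node attack graph with two parallel paths (v_s→v_1→v_2→v_4→v_5 and v_s→v_1→v_3→v_4→v_5), edge attack probabilities e^{-x_{i,j}}, and budget B > 0, a non-behavioral defender's minimum of the true loss max(e^{-(x_{s1}+x_{12}+x_{24}+x_{45})}, e^{-(x_{s1}+x_{13}+x_{34}+x_{45})}) subject to the investments being nonnegative and summing to at most B equals e^{-B}. -/
open Real Set

/-- In the 5-node two-parallel-path attack graph with edge probabilities `e^{-x}` and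
budget `B > 0`, the minimum of the true loss over nonnegative allocations summing to at
most `B` equals `e^{-B}`. -/
theorem rational_min_loss_two_paths (B : ℝ) (hB : 0 < B) :
    IsLeast
      {L : ℝ | ∃ xs1 x12 x24 x13 x34 x45 : ℝ,
        0 ≤ xs1 ∧ 0 ≤ x12 ∧ 0 ≤ x24 ∧ 0 ≤ x13 ∧ 0 ≤ x34 ∧ 0 ≤ x45 ∧
        xs1 + x12 + x24 + x13 + x34 + x45 ≤ B ∧
        L = max (Real.exp (-(xs1 + x12 + x24 + x45)))
                (Real.exp (-(xs1 + x13 + x34 + x45)))}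
      (Real.exp (-B)) := by
  constructor
  · exact ⟨B, 0, 0, 0, 0, 0, le_of_lt hB, le_refl 0, le_refl 0, le_refl 0, le_refl 0,
      le_refl 0, by linarith, by norm_num⟩
  · rintro L ⟨a, b, c, d, e, f, ha, hb, hc, hd, he, hf, hsum, rfl⟩
    exact le_max_of_le_left (Real.exp_le_exp.mpr (by linarith))
end

section
/- For a behavioral defender with parameter α ∈ (0,1) in the two-parallel-path attack graph, the optimal investments minimizing the perceived loss max(e^{-x_{s1}^α - x_{12}^α - x_{24}^α - x_{45}^α}, e^{-x_{s1}^α - x_{13}^α - x_{34}^α - x_{45}^α}) subject to a budget B satisfy x_{12} = x_{24} = x_{13} = x_{34} = 2^{1/(α-1)} x_{s1} and x_{s1} = x_{45} = B / (2 + 4·2^{1/(α-1)}). -/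
/-!
An optimum does at least as well as the candidate allocation
`a = (t, c t, c t, c t, c t, t)` with `c = 2^(1/(α-1))` and `t = B / (2 + 4 c)`, so both path
sums of the optimum are at least the common path sum of `a`. Adding them, the optimum does at
least as well as `a` for the separable objective
`2 y_{s1}^α + y_{12}^α + y_{24}^α + y_{13}^α + y_{34}^α + 2 y_{45}^α`.
The choice of `c` makes all partial derivatives of this objective equal at `a`, so its tangent
hyperplane at `a` is constant on the budget simplex; strict concavity of `y ↦ y^α` then makes `a`
the unique maximiser of the objective on the simplex.
-/

open Real Set

lemma rpow_lt_tangent {α a x : ℝ} (h0 : 0 < α) (h1 : α < 1) (ha : 0 < a) (hx : 0 ≤ x)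
    (hne : x ≠ a) : x ^ α < a ^ α + α * a ^ (α - 1) * (x - a) := by
  set s : ℝ := x / a - 1 with hs
  have hs_ge : -1 ≤ s := by linarith [div_nonneg hx ha.le]
  have hs_ne : s ≠ 0 := by
    rw [hs, sub_ne_zero, ne_eq, div_eq_one_iff_eq ha.ne']
    exact hne
  have hx_eq : x = a * (1 + s) := by rw [hs]; field_simp; ring
  calc x ^ α = a ^ α * (1 + s) ^ α := by rw [hx_eq, mul_rpow ha.le (by linarith)]
    _ < a ^ α * (1 + α * s) :=
        mul_lt_mul_of_pos_left (rpow_one_add_lt_one_add_mul_self hs_ge hs_ne h0 h1)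
          (rpow_pos_of_pos ha α)
    _ = a ^ α + α * a ^ (α - 1) * (x - a) := by
        rw [rpow_sub ha, rpow_one, hs]; field_simp

lemma rpow_le_tangent {α a x : ℝ} (h0 : 0 < α) (h1 : α < 1) (ha : 0 < a) (hx : 0 ≤ x) :
    x ^ α ≤ a ^ α + α * a ^ (α - 1) * (x - a) := by
  rcases eq_or_ne x a with rfl | hne
  · simp
  · exact (rpow_lt_tangent h0 h1 ha hx hne).le

lemma eq_of_tangent_le_rpow {α a x : ℝ} (h0 : 0 < α) (h1 : α < 1) (ha : 0 < a) (hx : 0 ≤ x)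
    (h : a ^ α + α * a ^ (α - 1) * (x - a) ≤ x ^ α) : x = a := by
  by_contra hne
  exact (rpow_lt_tangent h0 h1 ha hx hne).not_ge h

theorem eq_of_weighted_rpow_sum_le {ι : Type*} [Fintype ι] {α L : ℝ}
    (h0 : 0 < α) (h1 : α < 1) {w a x : ι → ℝ} (hw : ∀ i, 0 < w i) (ha : ∀ i, 0 < a i)
    (hx : ∀ i, 0 ≤ x i)
    (hslope : ∀ i, w i * (α * a i ^ (α - 1)) = L) (hsum : ∑ i, x i = ∑ i, a i)
    (hle : ∑ i, w i * a i ^ α ≤ ∑ i, w i * x i ^ α) : x = a := by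
  set gap : ι → ℝ := fun i ↦ w i * (a i ^ α + α * a i ^ (α - 1) * (x i - a i) - x i ^ α)
  have hgap_nonneg : ∀ i, 0 ≤ gap i := fun i ↦
    mul_nonneg (hw i).le (sub_nonneg.mpr (rpow_le_tangent h0 h1 (ha i) (hx i)))
  have hgap_sum : ∑ i, gap i = ∑ i, w i * a i ^ α + L * (∑ i, x i - ∑ i, a i)
      - ∑ i, w i * x i ^ α := by
    have hgap : ∀ i, gap i = w i * a i ^ α + L * (x i - a i) - w i * x i ^ α := fun i ↦ by
      rw [← hslope i]; ring
    simp only [hgap, Finset.sum_sub_distrib, Finset.sum_add_distrib, ← Finset.mul_sum]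
  have hgap_sum_zero : ∑ i, gap i = 0 :=
    le_antisymm (by rw [hgap_sum, hsum]; linarith) (Finset.sum_nonneg fun i _ ↦ hgap_nonneg i)
  funext i
  have hgap_zero : gap i = 0 :=
    (Finset.sum_eq_zero_iff_of_nonneg fun i _ ↦ hgap_nonneg i).mp hgap_sum_zero i
      (Finset.mem_univ i)
  refine eq_of_tangent_le_rpow h0 h1 (ha i) (hx i) (sub_nonpos.mp ?_)
  exact ((mul_eq_zero.mp hgap_zero).resolve_left (hw i).ne').le

/-- The behavioral defender's optimal investments in the two-parallel-path graph:
any minimizer of the perceived loss over nonnegative allocations summing to `B`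
satisfies `x12 = x24 = x13 = x34 = 2^(1/(α-1)) · xs1` and
`xs1 = x45 = B / (2 + 4·2^(1/(α-1)))`. -/
theorem behavioral_optimal_investments (α B : ℝ) (hα : α ∈ Ioo (0:ℝ) 1) (hB : 0 < B)
    (xs1 x12 x24 x13 x34 x45 : ℝ)
    (hnn : 0 ≤ xs1 ∧ 0 ≤ x12 ∧ 0 ≤ x24 ∧ 0 ≤ x13 ∧ 0 ≤ x34 ∧ 0 ≤ x45)
    (hsum : xs1 + x12 + x24 + x13 + x34 + x45 = B)
    (hopt : ∀ ys1 y12 y24 y13 y34 y45 : ℝ,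
      (0 ≤ ys1 ∧ 0 ≤ y12 ∧ 0 ≤ y24 ∧ 0 ≤ y13 ∧ 0 ≤ y34 ∧ 0 ≤ y45) →
      ys1 + y12 + y24 + y13 + y34 + y45 = B →
      max (Real.exp (-(xs1 ^ α) - x12 ^ α - x24 ^ α - x45 ^ α))
          (Real.exp (-(xs1 ^ α) - x13 ^ α - x34 ^ α - x45 ^ α)) ≤
      max (Real.exp (-(ys1 ^ α) - y12 ^ α - y24 ^ α - y45 ^ α))
          (Real.exp (-(ys1 ^ α) - y13 ^ α - y34 ^ α - y45 ^ α))) :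
    x12 = (2:ℝ) ^ (1 / (α - 1)) * xs1 ∧
    x24 = (2:ℝ) ^ (1 / (α - 1)) * xs1 ∧
    x13 = (2:ℝ) ^ (1 / (α - 1)) * xs1 ∧
    x34 = (2:ℝ) ^ (1 / (α - 1)) * xs1 ∧
    xs1 = B / (2 + 4 * (2:ℝ) ^ (1 / (α - 1))) ∧
    x45 = B / (2 + 4 * (2:ℝ) ^ (1 / (α - 1))) := by
  obtain ⟨h0, h1⟩ := hα
  obtain ⟨n1, n2, n3, n4, n5, n6⟩ := hnn
  set c : ℝ := (2:ℝ) ^ (1 / (α - 1))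
  set t : ℝ := B / (2 + 4 * c)
  have hc : 0 < c := by positivity
  have ht : 0 < t := by positivity
  have hct : 0 < c * t := mul_pos hc ht
  have hc_rpow : c ^ (α - 1) = 2 := by
    simp only [c, one_div]
    exact rpow_inv_rpow zero_le_two (sub_ne_zero.mpr h1.ne)
  have hslope : α * (c * t) ^ (α - 1) = 2 * (α * t ^ (α - 1)) := by
    rw [mul_rpow hc.le ht.le, hc_rpow]; ring
  have hbudget : t + c * t + c * t + c * t + c * t + t = B := by
    simp only [t]; field_simp; ring
  have hpaths := hopt t (c * t) (c * t) (c * t) (c * t) t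
    ⟨ht.le, hct.le, hct.le, hct.le, hct.le, ht.le⟩ hbudget
  rw [max_self, max_le_iff, exp_le_exp, exp_le_exp] at hpaths
  have hx := eq_of_weighted_rpow_sum_le h0 h1 (L := 2 * (α * t ^ (α - 1)))
    (w := ![2, 1, 1, 1, 1, 2]) (a := ![t, c * t, c * t, c * t, c * t, t])
    (x := ![xs1, x12, x24, x13, x34, x45])
    (by simp [Fin.forall_fin_succ]) (by simp [Fin.forall_fin_succ, ht, hct])
    (by simp [Fin.forall_fin_succ, n1, n2, n3, n4, n5, n6]) (by simp [Fin.forall_fin_succ, hslope])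
    (by simp only [Fin.sum_univ_six, Matrix.cons_val]; linarith)
    (by simp only [Fin.sum_univ_six, Matrix.cons_val]; linarith)
  simp only [funext_iff, Fin.forall_fin_succ, Matrix.cons_val_zero, Matrix.cons_val_succ,
    Matrix.cons_val_fin_one, forall_const] at hx
  obtain ⟨rfl, rfl, rfl, rfl, rfl, rfl⟩ := hx
  exact ⟨rfl, rfl, rfl, rfl, rfl, rfl⟩
end

section
/- For each α ∈ (0,1), the behavioral true loss exceeds the rational loss by a multiplicative factor that grows exponentially in B: the ratio of behavioral to rational true loss is exp(B·(1 - 1/(1+2^{α/(α-1)})) - 2^{α/(α-1)}), which tends to infinity as B → ∞. -/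
open Real Set Filter

/-- The ratio of behavioral to rational true loss equals
`exp(B·(1 - 1/(1+t)) - t)` where `t = 2^{α/(α-1)}`, and tends to infinity as `B → ∞`. -/
theorem behavioral_rational_ratio (α : ℝ) (hα : α ∈ Ioo (0:ℝ) 1) :
    (∀ B : ℝ,
      (Real.exp (-((2:ℝ) ^ (α / (α - 1)))) *
          Real.exp (-(B / (1 + (2:ℝ) ^ (α / (α - 1)))))) / Real.exp (-B) =
        Real.exp (B * (1 - 1 / (1 + (2:ℝ) ^ (α / (α - 1)))) -
          (2:ℝ) ^ (α / (α - 1)))) ∧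
    Tendsto (fun B : ℝ =>
        Real.exp (B * (1 - 1 / (1 + (2:ℝ) ^ (α / (α - 1)))) -
          (2:ℝ) ^ (α / (α - 1))))
      atTop atTop := by
  set t : ℝ := (2:ℝ) ^ (α / (α - 1)) with ht
  have ht0 : 0 < t := Real.rpow_pos_of_pos (by norm_num) _
  have h1t : 0 < 1 + t := by linarith
  constructor
  · intro B
    rw [← Real.exp_add, ← Real.exp_sub]
    congr 1
    field_simp
    ring
  · apply Real.tendsto_exp_atTop.comp
    have hc : 0 < 1 - 1 / (1 + t) := by
      have : 1 / (1 + t) < 1 := by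
        rw [div_lt_one h1t]; linarith
      linarith
    exact (tendsto_atTop_add_const_right _ (-t)
      (Tendsto.atTop_mul_const hc tendsto_id)).congr (fun B => by simp only [id]; ring)
end

section
/- In the spreading-constrained behavioral model on the two-parallel-path graph, if each of the six edges must receive investment at least η ≥ 0 with 6η ≤ B, then the rational defender's (α = 1) optimal true loss is e^{-(B - 2η)}, strictly worse than the unconstrained optimum e^{-B} whenever η > 0. -/
open Real Set

/-- With the minimum-spreading constraint `x ≥ η` on each of the six edges and total
budget `B` (with `η ≥ 0`, `6η ≤ B`), the rational defender's optimal true loss is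
`e^{-(B-2η)}`, which is strictly worse than the unconstrained optimum `e^{-B}`
whenever `η > 0`. -/
theorem spreading_constrained_rational_loss (B η : ℝ) (hη : 0 ≤ η) (h6 : 6 * η ≤ B) :
    IsLeast
      {L : ℝ | ∃ xs1 x12 x24 x13 x34 x45 : ℝ,
        η ≤ xs1 ∧ η ≤ x12 ∧ η ≤ x24 ∧ η ≤ x13 ∧ η ≤ x34 ∧ η ≤ x45 ∧
        xs1 + x12 + x24 + x13 + x34 + x45 = B ∧
        L = max (Real.exp (-(xs1 + x12 + x24 + x45)))
                (Real.exp (-(xs1 + x13 + x34 + x45)))}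
      (Real.exp (-(B - 2 * η))) ∧
    (0 < η → Real.exp (-B) < Real.exp (-(B - 2 * η))) := by
  refine ⟨⟨⟨B - 5 * η, η, η, η, η, η, by linarith, le_refl η, le_refl η, le_refl η,
      le_refl η, le_refl η, by ring, ?_⟩, ?_⟩, fun hpos => ?_⟩
  · rw [max_self]
    congr 1
    ring
  · rintro L ⟨xs1, x12, x24, x13, x34, x45, h1, h2, h3, h4, h5, h6', hsum, rfl⟩
    refine le_trans ?_ (le_max_left _ _)
    exact Real.exp_le_exp.mpr (by linarith)
  · exact Real.exp_lt_exp.mpr (by linarith)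
end

section
/- For an edge with baseline probability p⁰ ∈ (0,1), sensitivity s ≥ 1, and investment x ≥ 0, the perceived probability w(p⁰ e^{-s x}) = exp(-(-log p⁰ + s x)^α) is a convex, strictly decreasing function of x for any α ∈ (0,1], and tends to 0 as x → ∞. -/
/-!
With `c = -log p⁰ ≥ 0` the perceived probability is `g (c + s x)` for `g t = exp (-t ^ α)`.
Since `t ↦ t ^ α` is concave on `[0, ∞)` for `α ≤ 1`, `-t ^ α` is convex and so is its composite
with the convex increasing `exp`; `g` is strictly decreasing and tends to `0`. All three properties
survive precomposition with the increasing affine map `x ↦ c + s x`, which maps `[0, ∞)` into itself.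
-/

open Real Set Filter

theorem ConvexOn.exp {E : Type*} [AddCommMonoid E] [Module ℝ E] {s : Set E} {f : E → ℝ}
    (hf : ConvexOn ℝ s f) : ConvexOn ℝ s fun x => Real.exp (f x) :=
  ⟨hf.1, fun x hx y hy _ _ ha hb hab =>
    (exp_le_exp.2 (hf.2 hx hy ha hb hab)).trans
      (convexOn_exp.2 (mem_univ (f x)) (mem_univ (f y)) ha hb hab)⟩

theorem ConvexOn.comp_const_add_mul {f : ℝ → ℝ} (hf : ConvexOn ℝ (Ici 0) f) {c s : ℝ}
    (hc : 0 ≤ c) (hs : 0 ≤ s) : ConvexOn ℝ (Ici 0) fun x => f (c + s * x) := by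
  refine ⟨convex_Ici 0, fun x hx y hy a b ha hb hab => ?_⟩
  have hx' : c + s * x ∈ Ici 0 := by simp only [mem_Ici] at hx ⊢; positivity
  have hy' : c + s * y ∈ Ici 0 := by simp only [mem_Ici] at hy ⊢; positivity
  convert hf.2 hx' hy' ha hb hab using 2
  simp only [smul_eq_mul]
  linear_combination -c * hab

namespace Real

variable {α : ℝ}

theorem convexOn_exp_neg_rpow (hα₀ : 0 ≤ α) (hα₁ : α ≤ 1) :
    ConvexOn ℝ (Ici 0) fun t : ℝ => exp (-t ^ α) :=
  (concaveOn_rpow hα₀ hα₁).neg.exp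

theorem strictAntiOn_exp_neg_rpow (hα : 0 < α) :
    StrictAntiOn (fun t : ℝ => exp (-t ^ α)) (Ici 0) :=
  exp_strictMono.comp_strictAntiOn fun _ hx _ _ hxy => neg_lt_neg (rpow_lt_rpow hx hxy hα)

theorem tendsto_exp_neg_rpow_atTop (hα : 0 < α) :
    Tendsto (fun t : ℝ => exp (-t ^ α)) atTop (nhds 0) :=
  tendsto_exp_atBot.comp (tendsto_neg_atTop_atBot.comp (tendsto_rpow_atTop hα))

theorem neg_log_mul_exp_neg {p : ℝ} (hp : p ≠ 0) (t : ℝ) :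
    -log (p * exp (-t)) = -log p + t := by
  rw [log_mul hp (exp_ne_zero _), log_exp]; ring

end Real

/-- For an edge with baseline probability `p⁰ ∈ (0,1)`, sensitivity `s ≥ 1`, and
investment `x ≥ 0`, the perceived probability
`w(p⁰ e^{-s x}) = exp(-(-log p⁰ + s x)^α)` is convex and strictly decreasing on
`[0,∞)` for any `α ∈ (0,1]`, and tends to `0` as `x → ∞`. -/
theorem perceived_edge_probability_properties (p0 s α : ℝ)
    (hp0 : p0 ∈ Ioo (0:ℝ) 1) (hs : 1 ≤ s) (hα : α ∈ Ioc (0:ℝ) 1) :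
    (∀ x : ℝ, 0 ≤ x →
      Real.exp (-(-Real.log (p0 * Real.exp (-(s * x)))) ^ α) =
        Real.exp (-(-Real.log p0 + s * x) ^ α)) ∧
    ConvexOn ℝ (Ici (0:ℝ)) (fun x : ℝ => Real.exp (-(-Real.log p0 + s * x) ^ α)) ∧
    StrictAntiOn (fun x : ℝ => Real.exp (-(-Real.log p0 + s * x) ^ α)) (Ici (0:ℝ)) ∧
    Tendsto (fun x : ℝ => Real.exp (-(-Real.log p0 + s * x) ^ α)) atTop (nhds 0) := by
  have hc : 0 ≤ -log p0 := neg_nonneg.2 (log_nonpos hp0.1.le hp0.2.le)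
  have hs₀ : 0 < s := one_pos.trans_le hs
  have hmaps : MapsTo (fun x => -log p0 + s * x) (Ici 0) (Ici 0) := fun x hx => by
    simp only [mem_Ici] at hx ⊢; positivity
  have hmono : StrictMonoOn (fun x => -log p0 + s * x) (Ici 0) := fun x _ y _ hxy => by
    simp only; gcongr
  refine ⟨fun x _ => by rw [neg_log_mul_exp_neg hp0.1.ne'], ?_, ?_, ?_⟩
  · exact (convexOn_exp_neg_rpow hα.1.le hα.2).comp_const_add_mul hc hs₀.le
  · exact (strictAntiOn_exp_neg_rpow hα.1).comp_strictMonoOn hmono hmaps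
  · exact (tendsto_exp_neg_rpow_atTop hα.1).comp
      (tendsto_atTop_add_const_left _ _ (tendsto_id.const_mul_atTop hs₀))
end
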